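/- In any MatP instance, if an agent is unmatched in some popular matching, then that agent is unmatched in every stable matching. -/
import Mathlib


open Classical

/-- An instance of matching under preferences (MatP): a bipartite graph on
workers `W` and firms `F` together with, for each agent, a strict linear order
on its neighbors (`pref x y z` means `x` strictly prefers `y` to `z`). -/
structure MatP (α : Type*) where
  W : Finset α
  F : Finset α
  disjWF : Disjoint W F
  adj : α → α → Prop
  adj_symm : ∀ x y, adj x y → adj y x
  adj_loopless : ∀ x, ¬ adj x x
  adj_bipartite : ∀ x y, adj x y → (x ∈ W ∧ y ∈ F) ∨ (x ∈ F ∧ y ∈ W)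
  pref : α → α → α → Prop
  pref_adj : ∀ x y z, pref x y z → adj x y ∧ adj x z
  pref_trans : ∀ x y z w, pref x y z → pref x z w → pref x y w
  pref_irrefl : ∀ x y, ¬ pref x y y
  pref_total : ∀ x y z, adj x y → adj x z → y ≠ z → pref x y z ∨ pref x z y

/-- `M` is a matching of instance `I`, encoded as a symmetric partial partner
function: `M x = some y` means the edge `{x,y}` belongs to the matching. -/
def IsMatching {α : Type*} (I : MatP α) (M : α → Option α) : Prop :=
  (∀ x y, M x = some y → I.adj x y) ∧ (∀ x y, M x = some y → M y = some x)

/-- Agent `x` prefers (partner) option `o` to option `o'`: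
being matched beats being unmatched, and among partners `x` uses `I.pref`. -/
def Better {α : Type*} (I : MatP α) (x : α) : Option α → Option α → Prop
  | some _, none => True
  | some y, some z => I.pref x y z
  | none, _ => False

/-- The vote of agent `x` between partner options `o` and `o'`. -/
noncomputable def voteO {α : Type*} (I : MatP α) (x : α) (o o' : Option α) : ℤ :=
  if Better I x o o' then 1 else if Better I x o' o then -1 else 0

/-- Popularity margin `Δ^I(M,M')`: the sum of all agents' votes. -/
noncomputable def margin {α : Type*} [DecidableEq α]
    (I : MatP α) (M M' : α → Option α) : ℤ :=
  ∑ x ∈ I.W ∪ I.F, voteO I x (M x) (M' x)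

/-- `M` is popular for `I`: it does not lose against any matching. -/
def Popular {α : Type*} [DecidableEq α] (I : MatP α) (M : α → Option α) : Prop :=
  ∀ M', IsMatching I M' → 0 ≤ margin I M M'

/-- `M` is stable for `I`: no blocking edge. -/
def Stable {α : Type*} (I : MatP α) (M : α → Option α) : Prop :=
  ∀ x y, I.adj x y → M x ≠ some y →
    (∃ z, M x = some z ∧ I.pref x z y) ∨ (∃ z, M y = some z ∧ I.pref y z x)

/-! ### Auxiliary machinery -/


lemma MatP.pref_asymm {α : Type*} (I : MatP α) {x y z : α}
    (h : I.pref x y z) : ¬ I.pref x z y :=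
  fun h' => I.pref_irrefl x y (I.pref_trans x y z y h h')

lemma voteO_self {α : Type*} (I : MatP α) (v : α) (o : Option α) :
    voteO I v o o = 0 := by
  have : ¬ Better I v o o := by
    cases o with
    | none => simp [Better]
    | some z => simpa [Better] using I.pref_irrefl v z
  simp [voteO, this]

lemma voteO_le_one {α : Type*} (I : MatP α) (v : α) (o o' : Option α) :
    voteO I v o o' ≤ 1 := by
  unfold voteO; split_ifs <;> omega

lemma voteO_eq_neg_one {α : Type*} (I : MatP α) (v : α) {o o' : Option α}
    (h1 : ¬ Better I v o o') (h2 : Better I v o' o) :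
    voteO I v o o' = -1 := by
  simp [voteO, h1, h2]

lemma better_none {α : Type*} (I : MatP α) (v : α) (o : Option α) :
    ¬ Better I v none o := fun h => h

lemma better_some_none {α : Type*} (I : MatP α) (v u : α) :
    Better I v (some u) none := trivial

lemma better_some_some {α : Type*} (I : MatP α) (v a b : α) :
    Better I v (some a) (some b) ↔ I.pref v a b := Iff.rfl

/-- The alternating path sequence: start at `x`, follow `N`, then `M`,
then `N`, ... -/
noncomputable def PathSeq {α : Type*} (N M : α → Option α) (x : α) : ℕ → Option α
  | 0 => some x
  | n + 1 => (PathSeq N M x n).bind (fun v => if n % 2 = 0 then N v else M v)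

lemma sum_pairs (g : ℕ → ℤ) (m : ℕ) :
    ∑ i ∈ Finset.range (2 * m + 1), g i
      = g 0 + ∑ j ∈ Finset.range m, (g (2 * j + 1) + g (2 * j + 2)) := by
  induction m with
  | zero => simp
  | succ n ih =>
      have h : 2 * (n + 1) + 1 = (2 * n + 1) + 1 + 1 := by ring
      rw [h, Finset.sum_range_succ, Finset.sum_range_succ, ih,
        Finset.sum_range_succ]
      ring

/-- If an agent is unmatched in some popular matching, then it is unmatched in
every stable matching. -/
theorem stable_unmatched_of_popular_unmatched {α : Type*} [DecidableEq α]
    (I : MatP α) (M N : α → Option α)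
    (hM : IsMatching I M) (hpop : Popular I M)
    (hN : IsMatching I N) (hstab : Stable I N)
    (x : α) (hx : M x = none) :
    N x = none := by
  by_contra hNx
  obtain ⟨y1, hy1⟩ : ∃ y, N x = some y := Option.ne_none_iff_exists'.mp hNx
  set S : ℕ → Option α := PathSeq N M x with hSdef
  have hS0 : S 0 = some x := rfl
  have hSsucc : ∀ n, S (n + 1) = (S n).bind (fun v => if n % 2 = 0 then N v else M v) :=
    fun n => rfl
  have hS1 : S 1 = some y1 := by
    rw [hSsucc 0, hS0]; simpa using hy1
  -- a step of the sequence is an edge of N or M according to parity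
  have hstep : ∀ n v w, S n = some v → S (n + 1) = some w →
      (if n % 2 = 0 then N v = some w else M v = some w) := by
    intro n v w hv hw
    rw [hSsucc n, hv] at hw
    by_cases hp : n % 2 = 0 <;> simp [hp] at hw ⊢ <;> exact hw
  -- none propagates
  have hnone : ∀ a b, a ≤ b → S a = none → S b = none := by
    intro a b hab ha
    induction b with
    | zero => exact Nat.le_zero.mp hab ▸ ha
    | succ b ih =>
        rcases Nat.lt_or_ge a (b + 1) with h | h
        · have := ih (by omega)
          rw [hSsucc b, this]; rfl
        · have : a = b + 1 := by omega
          exact this ▸ ha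
  have hsome : ∀ a b, a ≤ b → S b ≠ none → ∃ v, S a = some v := by
    intro a b hab hb
    cases h : S a with
    | none => exact absurd (hnone a b hab h) hb
    | some v => exact ⟨v, rfl⟩
  -- injectivity of the path sequence
  have hinj : ∀ j, ∀ i < j, ∀ v, S i = some v → S j = some v → False := by
    intro j
    induction j using Nat.strong_induction_on with
    | _ j ih =>
      intro i hij v hi hj
      obtain ⟨j', rfl⟩ : ∃ j', j = j' + 1 := ⟨j - 1, by omega⟩
      obtain ⟨u, hu⟩ : ∃ u, S j' = some u := by
        cases h : S j' with
        | none => rw [hSsucc j', h] at hj; simp at hj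
        | some u => exact ⟨u, rfl⟩
      have hedge : if j' % 2 = 0 then N u = some v else M u = some v :=
        hstep j' u v hu hj
      -- i = j' is impossible (self-loop)
      have hne : i ≠ j' := by
        rintro rfl
        rw [hi] at hu; cases hu
        by_cases hp : i % 2 = 0
        · rw [if_pos hp] at hedge
          exact I.adj_loopless v (hN.1 v v hedge)
        · rw [if_neg hp] at hedge
          exact I.adj_loopless v (hM.1 v v hedge)
      have hilt : i < j' := by omega
      by_cases hpar : i % 2 = j' % 2
      · -- successor of v at step i has the same type as the edge u → v
        obtain ⟨w, hw⟩ : ∃ w, S (i + 1) = some w :=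
          hsome (i + 1) (j' + 1) (by omega) (by rw [hj]; simp)
        have hedge2 : if i % 2 = 0 then N v = some w else M v = some w :=
          hstep i v w hi hw
        have hwu : w = u := by
          by_cases hp : j' % 2 = 0
          · rw [if_pos hp] at hedge
            rw [if_pos (by omega)] at hedge2
            have : N v = some u := hN.2 u v hedge
            rw [this] at hedge2; exact (Option.some.inj hedge2).symm
          · rw [if_neg hp] at hedge
            rw [if_neg (by omega)] at hedge2
            have : M v = some u := hM.2 u v hedge
            rw [this] at hedge2; exact (Option.some.inj hedge2).symm
        subst hwu
        have : i + 1 ≠ j' := by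
          intro h; omega
        have hlt : i + 1 < j' := by
          rcases Nat.lt_or_ge (i + 1) j' with h | h
          · exact h
          · exfalso; omega
        exact ih j' (by omega) (i + 1) hlt w hw hu
      · -- predecessor of v at step i exists and has same type as u → v,
        -- unless i = 0
        rcases Nat.eq_zero_or_pos i with rfl | hipos
        · -- i = 0: v = x, and j' must be odd, so M u = some x, contradiction
          have hvx : v = x := by rw [hS0] at hi; exact (Option.some.inj hi).symm
          subst hvx
          have hjodd : ¬ j' % 2 = 0 := by omega
          rw [if_neg hjodd] at hedge
          have : M v = some u := hM.2 u v hedge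
          rw [hx] at this; cases this
        · obtain ⟨i', rfl⟩ : ∃ i', i = i' + 1 := ⟨i - 1, by omega⟩
          obtain ⟨t, ht⟩ : ∃ t, S i' = some t :=
            hsome i' (j' + 1) (by omega) (by rw [hj]; simp)
          have hedge3 : if i' % 2 = 0 then N t = some v else M t = some v :=
            hstep i' t v ht hi
          have htu : t = u := by
            by_cases hp : j' % 2 = 0
            · rw [if_pos hp] at hedge
              rw [if_pos (by omega)] at hedge3
              have h1 : N v = some u := hN.2 u v hedge
              have h2 : N v = some t := hN.2 t v hedge3
              rw [h1] at h2; exact (Option.some.inj h2).symm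
            · rw [if_neg hp] at hedge
              rw [if_neg (by omega)] at hedge3
              have h1 : M v = some u := hM.2 u v hedge
              have h2 : M v = some t := hM.2 t v hedge3
              rw [h1] at h2; exact (Option.some.inj h2).symm
          subst htu
          exact ih j' (by omega) i' (by omega) t ht hu
  -- endpoints of edges are in W ∪ F
  have hadjWF : ∀ a b, I.adj a b → a ∈ I.W ∪ I.F ∧ b ∈ I.W ∪ I.F := by
    intro a b h
    rcases I.adj_bipartite a b h with ⟨h1, h2⟩ | ⟨h1, h2⟩ <;>
      simp [Finset.mem_union, h1, h2]
  have hmem : ∀ n v w, S n = some v → S (n + 1) = some w →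
      v ∈ I.W ∪ I.F ∧ w ∈ I.W ∪ I.F := by
    intro n v w hv hw
    have h := hstep n v w hv hw
    by_cases hp : n % 2 = 0
    · rw [if_pos hp] at h; exact hadjWF v w (hN.1 v w h)
    · rw [if_neg hp] at h; exact hadjWF v w (hM.1 v w h)
  -- the sequence eventually dies
  have hterm : ∃ k, S k = none := by
    by_contra hc
    push_neg at hc
    have hsome' : ∀ n, ∃ v, S n = some v := by
      intro n; cases h : S n with
      | none => exact absurd h (hc n)
      | some v => exact ⟨v, rfl⟩
    set Z : ℕ → α := fun n => Classical.choose (hsome' n) with hZ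
    have hZspec : ∀ n, S n = some (Z n) := fun n => Classical.choose_spec (hsome' n)
    have hZmem : ∀ n, Z n ∈ I.W ∪ I.F := fun n =>
      (hmem n (Z n) (Z (n + 1)) (hZspec n) (hZspec (n + 1))).1
    have hcard : (Finset.range ((I.W ∪ I.F).card + 1)).card ≤ (I.W ∪ I.F).card := by
      apply Finset.card_le_card_of_injOn Z (fun n _ => hZmem n)
      intro a _ b _ hab
      by_contra hne
      rcases Nat.lt_or_ge a b with h | h
      · exact hinj b a h (Z a) (hZspec a) (by rw [hab]; exact hZspec b)
      · exact hinj a b (by omega) (Z b) (hZspec b) (by rw [← hab]; exact hZspec a)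
    simp [Finset.card_range] at hcard
  obtain ⟨k, hk, hkmin⟩ : ∃ k, S k = none ∧ ∀ m < k, S m ≠ none :=
    ⟨Nat.find hterm, Nat.find_spec hterm, fun m hm => Nat.find_min hterm hm⟩
  have hk2 : 2 ≤ k := by
    by_contra hlt
    interval_cases k
    · rw [hS0] at hk; cases hk
    · rw [hS1] at hk; cases hk
  set Y : ℕ → α := fun i => (S i).getD x with hYdef
  have hYspec : ∀ i, i < k → S i = some (Y i) := by
    intro i hi
    cases h : S i with
    | none => exact absurd h (hkmin i hi)
    | some v => simp only [hYdef]; rw [h]; rfl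
  have hY0 : Y 0 = x := by simp [hYdef]; rw [hS0]; rfl
  have hYinj : ∀ i j, i < k → j < k → Y i = Y j → i = j := by
    intro i j hi hj hij
    by_contra hne
    rcases Nat.lt_or_ge i j with h | h
    · exact hinj j i h (Y i) (hYspec i hi) (by rw [hij]; exact hYspec j hj)
    · exact hinj i j (by omega) (Y j) (hYspec j hj) (by rw [← hij]; exact hYspec i hi)
  have hedgeN : ∀ i, i % 2 = 0 → i + 1 < k → N (Y i) = some (Y (i + 1)) := by
    intro i hp hik
    have h := hstep i (Y i) (Y (i + 1)) (hYspec i (by omega)) (hYspec (i + 1) hik)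
    rwa [if_pos hp] at h
  have hedgeM : ∀ i, i % 2 = 1 → i + 1 < k → M (Y i) = some (Y (i + 1)) := by
    intro i hp hik
    have h := hstep i (Y i) (Y (i + 1)) (hYspec i (by omega)) (hYspec (i + 1) hik)
    rwa [if_neg (by omega)] at h
  have hendN : (k - 1) % 2 = 0 → N (Y (k - 1)) = none := by
    intro hp
    have h1 : S (k - 1 + 1) = (S (k - 1)).bind
        (fun v => if (k - 1) % 2 = 0 then N v else M v) := hSsucc (k - 1)
    rw [hYspec (k - 1) (by omega), show k - 1 + 1 = k by omega, hk] at h1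
    simp [hp] at h1
    exact h1.symm
  have hendM : (k - 1) % 2 = 1 → M (Y (k - 1)) = none := by
    intro hp
    have h1 : S (k - 1 + 1) = (S (k - 1)).bind
        (fun v => if (k - 1) % 2 = 0 then N v else M v) := hSsucc (k - 1)
    rw [hYspec (k - 1) (by omega), show k - 1 + 1 = k by omega, hk] at h1
    simp [show ¬ (k-1) % 2 = 0 by omega] at h1
    exact h1.symm
  have hNodd : ∀ i, i < k → i % 2 = 1 → N (Y i) = some (Y (i - 1)) := by
    intro i hi hp
    have h := hedgeN (i - 1) (by omega) (by omega)
    rw [show i - 1 + 1 = i by omega] at h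
    exact hN.2 _ _ h
  have hMeven : ∀ i, i < k → i % 2 = 0 → i ≠ 0 → M (Y i) = some (Y (i - 1)) := by
    intro i hi hp h0
    have h := hedgeM (i - 1) (by omega) (by omega)
    rw [show i - 1 + 1 = i by omega] at h
    exact hM.2 _ _ h
  -- the set of path vertices and the switched matching
  set P : Finset α := (Finset.range k).image Y with hPdef
  have hmemP : ∀ v, v ∈ P ↔ ∃ i, i < k ∧ Y i = v := by
    intro v
    simp [hPdef, Finset.mem_image, Finset.mem_range]
  set M' : α → Option α := fun v => if v ∈ P then N v else M v with hM'def
  have hM'in : ∀ v, v ∈ P → M' v = N v := by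
    intro v hv; simp [hM'def, hv]
  have hM'out : ∀ v, v ∉ P → M' v = M v := by
    intro v hv; simp [hM'def, hv]
  -- partners along the path stay on the path
  have hNpath : ∀ i, i < k → ∀ u, N (Y i) = some u → ∃ j, j < k ∧ Y j = u := by
    intro i hi u hu
    by_cases hp : i % 2 = 0
    · rcases Nat.lt_or_ge (i + 1) k with h | h
      · have := hedgeN i hp h
        rw [this] at hu
        exact ⟨i + 1, h, (Option.some.inj hu)⟩
      · have hik : i = k - 1 := by omega
        rw [hik] at hu
        rw [hendN (by omega)] at hu
        cases hu
    · have := hNodd i hi (by omega)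
      rw [this] at hu
      exact ⟨i - 1, by omega, Option.some.inj hu⟩
  have hMpath : ∀ i, i < k → ∀ u, M (Y i) = some u → ∃ j, j < k ∧ Y j = u := by
    intro i hi u hu
    rcases Nat.eq_zero_or_pos i with rfl | hipos
    · rw [hY0, hx] at hu; cases hu
    · by_cases hp : i % 2 = 1
      · rcases Nat.lt_or_ge (i + 1) k with h | h
        · have := hedgeM i hp h
          rw [this] at hu
          exact ⟨i + 1, h, Option.some.inj hu⟩
        · have hik : i = k - 1 := by omega
          rw [hik] at hu
          rw [hendM (by omega)] at hu
          cases hu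
      · have := hMeven i hi (by omega) (by omega)
        rw [this] at hu
        exact ⟨i - 1, by omega, Option.some.inj hu⟩
  -- M' is a matching
  have hM'm : IsMatching I M' := by
    constructor
    · intro a b hab
      by_cases h : a ∈ P
      · rw [hM'in a h] at hab; exact hN.1 a b hab
      · rw [hM'out a h] at hab; exact hM.1 a b hab
    · intro a b hab
      by_cases h : a ∈ P
      · rw [hM'in a h] at hab
        obtain ⟨i, hi, rfl⟩ := (hmemP a).mp h
        obtain ⟨j, hj, rfl⟩ := hNpath i hi b hab
        rw [hM'in (Y j) ((hmemP (Y j)).mpr ⟨j, hj, rfl⟩)]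
        exact hN.2 _ _ hab
      · rw [hM'out a h] at hab
        have hbP : b ∉ P := by
          intro hb
          obtain ⟨i, hi, rfl⟩ := (hmemP b).mp hb
          have h2 : M (Y i) = some a := hM.2 a _ hab
          obtain ⟨j, hj, rfl⟩ := hMpath i hi a h2
          exact h ((hmemP (Y j)).mpr ⟨j, hj, rfl⟩)
        rw [hM'out b hbP]
        exact hM.2 a b hab
  -- path vertices lie in W ∪ F
  have hPsub : P ⊆ I.W ∪ I.F := by
    intro v hv
    obtain ⟨i, hi, rfl⟩ := (hmemP v).mp hv
    rcases Nat.lt_or_ge (i + 1) k with h | h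
    · exact (hmem i _ _ (hYspec i hi) (hYspec (i + 1) h)).1
    · have hik : i = k - 1 := by omega
      have h2 := (hmem (k - 2) (Y (k - 2)) (Y (k - 1)) (hYspec (k - 2) (by omega))
        (by rw [show k - 2 + 1 = k - 1 by omega]; exact hYspec (k - 1) (by omega))).2
      rwa [← hik] at h2
  -- the votes along the path
  set g : ℕ → ℤ := fun i => voteO I (Y i) (M (Y i)) (N (Y i)) with hgdef
  have hmargin : margin I M M' = ∑ i ∈ Finset.range k, g i := by
    have h1 : ∑ v ∈ P, voteO I v (M v) (M' v) = margin I M M' := by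
      apply Finset.sum_subset hPsub
      intro v _ hvP
      rw [hM'out v hvP, voteO_self]
    rw [← h1, hPdef, Finset.sum_image ?hinj]
    case hinj =>
      intro a ha b hb hab
      exact hYinj a b (Finset.mem_range.mp ha) (Finset.mem_range.mp hb) hab
    apply Finset.sum_congr rfl
    intro i hi
    rw [hM'in (Y i) ((hmemP (Y i)).mpr ⟨i, Finset.mem_range.mp hi, rfl⟩), hgdef]
  have hg0 : g 0 = -1 := by
    simp only [hgdef]
    rw [hY0, hx, hy1]
    exact voteO_eq_neg_one I x (better_none I x _) (better_some_none I x y1)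
  have hpair : ∀ i, i % 2 = 1 → i + 1 < k → g i + g (i + 1) ≤ 0 := by
    intro i hp hik
    have hik' : i < k := by omega
    have hMuv : M (Y i) = some (Y (i + 1)) := hedgeM i hp hik
    have hMvu : M (Y (i + 1)) = some (Y i) := hM.2 _ _ hMuv
    have hNu : N (Y i) = some (Y (i - 1)) := hNodd i hik' hp
    have hadj : I.adj (Y i) (Y (i + 1)) := hM.1 _ _ hMuv
    have hne : N (Y i) ≠ some (Y (i + 1)) := by
      rw [hNu]; intro h
      have := hYinj (i - 1) (i + 1) (by omega) hik (Option.some.inj h)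
      omega
    rcases hstab (Y i) (Y (i + 1)) hadj hne with ⟨z, hz, hpz⟩ | ⟨z, hz, hpz⟩
    · have hgi : g i = -1 := by
        simp only [hgdef]
        rw [hMuv, hz]
        refine voteO_eq_neg_one I _ ?_ ?_
        · rw [better_some_some]; exact I.pref_asymm hpz
        · rw [better_some_some]; exact hpz
      have h2 := voteO_le_one I (Y (i + 1)) (M (Y (i + 1))) (N (Y (i + 1)))
      simp only [hgdef]
      simp only [hgdef] at hgi
      linarith
    · have hgi : g (i + 1) = -1 := by
        simp only [hgdef]
        rw [hMvu, hz]
        refine voteO_eq_neg_one I _ ?_ ?_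
        · rw [better_some_some]; exact I.pref_asymm hpz
        · rw [better_some_some]; exact hpz
      have h2 := voteO_le_one I (Y i) (M (Y i)) (N (Y i))
      simp only [hgdef]
      simp only [hgdef] at hgi
      linarith
  have hlast : (k - 1) % 2 = 1 → g (k - 1) = -1 := by
    intro hp
    simp only [hgdef]
    rw [hendM hp, hNodd (k - 1) (by omega) hp]
    exact voteO_eq_neg_one I _ (better_none I _ _) (better_some_none I _ _)
  -- summing up
  have hsum : ∑ i ∈ Finset.range k, g i ≤ -1 := by
    rcases Nat.even_or_odd k with ⟨m, hm⟩ | ⟨m, hm⟩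
    · -- k even, k = 2 * (m - 1) + 2
      have hm1 : 1 ≤ m := by omega
      have hk' : k = (2 * (m - 1) + 1) + 1 := by omega
      rw [hk', Finset.sum_range_succ, sum_pairs]
      have hpairs : ∑ j ∈ Finset.range (m - 1), (g (2 * j + 1) + g (2 * j + 2)) ≤ 0 := by
        apply Finset.sum_nonpos
        intro j hj
        exact hpair (2 * j + 1) (by omega) (by
          have := Finset.mem_range.mp hj; omega)
      have hlast' : g (2 * (m - 1) + 1) = -1 := by
        have : 2 * (m - 1) + 1 = k - 1 := by omega
        rw [this]; exact hlast (by omega)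
      linarith
    · -- k odd, k = 2 * m + 1
      rw [hm, sum_pairs]
      have hpairs : ∑ j ∈ Finset.range m, (g (2 * j + 1) + g (2 * j + 2)) ≤ 0 := by
        apply Finset.sum_nonpos
        intro j hj
        exact hpair (2 * j + 1) (by omega) (by
          have := Finset.mem_range.mp hj; omega)
      linarith
  have hfinal := hpop M' hM'm
  rw [hmargin] at hfinal
  linarith
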